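/- arXiv:1705.07686 — 2 statements merged into one kernel-verified Lean document; each statement's English description precedes it below -/
import Mathlib

section
/- Let S be a linear schema, l a label, and ρ, ρ' paths through S such that ρ is l-reducible to ρ'. Then (1) the sequence of function and predicate symbols through which ρ' passes is a subsequence of the sequence of function and predicate symbols through which ρ passes, (2) ρ and ρ' contain the same number of occurrences of the letter l, and (3) the length of ρ' is at most the length of ρ. -/
namespace SchemaSlicing

/- Function symbols, predicate symbols, variables and labels are drawn from
   fixed infinite sets; we model each by ℕ. Arities are implicit: each
   occurrence of a symbol carries the list of its arguments. -/
abbrev Var := ℕ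
abbrev Fn := ℕ
abbrev Pn := ℕ
abbrev Label := ℕ

/-- Structured program schemas. `loop` is the while-construct. -/
inductive Schema : Type where
  | skip : Schema
  | label : Label → Schema
  | assign : Var → Fn → List Var → Schema
  | seq : Schema → Schema → Schema
  | ite : Pn → List Var → Schema → Schema → Schema
  | loop : Pn → List Var → Schema → Schema
  deriving DecidableEq

/-- Letters of the alphabet L(S): labels, assignment letters ⟨y:=f(x)⟩ and
    predicate letters ⟨p(x),Z⟩. -/
inductive Letter : Type where
  | lab : Label → Letter
  | asgn : Var → Fn → List Var → Letter
  | pred : Pn → List Var → Bool → Letter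
  deriving DecidableEq

/-- Symbols: function symbols, predicate symbols and labels. -/
inductive Sym : Type where
  | fn : Fn → Sym
  | pn : Pn → Sym
  | lab : Label → Sym
  deriving DecidableEq

/-- The list of occurrences of function symbols, predicate symbols and labels in a schema. -/
def Schema.syms : Schema → List Sym
  | .skip => []
  | .label l => [Sym.lab l]
  | .assign _ f _ => [Sym.fn f]
  | .seq S₁ S₂ => S₁.syms ++ S₂.syms
  | .ite p _ S₁ S₂ => Sym.pn p :: (S₁.syms ++ S₂.syms)
  | .loop q _ T => Sym.pn q :: T.syms

/-- A schema is linear if no function symbol, predicate symbol or label occurs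
    more than once in it. -/
def Schema.Linear (S : Schema) : Prop := S.syms.Nodup

/-- Π(S), the set of terminating paths through S. -/
inductive Paths : Schema → List Letter → Prop where
  | skip : Paths Schema.skip []
  | label (l : Label) : Paths (Schema.label l) [Letter.lab l]
  | assign (y : Var) (f : Fn) (xs : List Var) :
      Paths (Schema.assign y f xs) [Letter.asgn y f xs]
  | seq {S₁ S₂ w₁ w₂} : Paths S₁ w₁ → Paths S₂ w₂ → Paths (Schema.seq S₁ S₂) (w₁ ++ w₂)
  | iteTrue {p xs S₁ S₂ w} : Paths S₁ w →
      Paths (Schema.ite p xs S₁ S₂) (Letter.pred p xs true :: w)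
  | iteFalse {p xs S₁ S₂ w} : Paths S₂ w →
      Paths (Schema.ite p xs S₁ S₂) (Letter.pred p xs false :: w)
  | loopFalse (q : Pn) (xs : List Var) (T : Schema) :
      Paths (Schema.loop q xs T) [Letter.pred q xs false]
  | loopTrue {q xs T w ws} : Paths T w → Paths (Schema.loop q xs T) ws →
      Paths (Schema.loop q xs T) (Letter.pred q xs true :: (w ++ ws))

/-- ρ ∈ pre(Π(S)): ρ is a (finite) path through S.  (Every finite path through S,
    including every finite prefix of an infinite path, is a prefix of a terminating path.) -/
def PathPrefix (S : Schema) (ρ : List Letter) : Prop := ∃ τ, Paths S τ ∧ ρ <+: τ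

/-- `IsQuotient S' S`: S' is obtained from S by deleting zero or more statements. -/
inductive IsQuotient : Schema → Schema → Prop where
  | skip (S : Schema) : IsQuotient Schema.skip S
  | refl (S : Schema) : IsQuotient S S
  | seq {S₁' S₁ S₂' S₂} : IsQuotient S₁' S₁ → IsQuotient S₂' S₂ →
      IsQuotient (Schema.seq S₁' S₂') (Schema.seq S₁ S₂)
  | loop {q xs T' T} : IsQuotient T' T → IsQuotient (Schema.loop q xs T') (Schema.loop q xs T)
  | ite {p xs T₁ S₁ T₂ S₂} : IsQuotient T₁ S₁ → IsQuotient T₂ S₂ →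
      IsQuotient (Schema.ite p xs T₁ T₂) (Schema.ite p xs S₁ S₂)

/-- The symbol (function symbol, predicate symbol or label) of a letter. -/
def Letter.sym : Letter → Sym
  | .lab l => Sym.lab l
  | .asgn _ f _ => Sym.fn f
  | .pred p _ _ => Sym.pn p

/-- proj_{S'}(ρ): delete from ρ all letters whose function or predicate symbols,
    or labels, do not occur in S'. -/
def proj (S' : Schema) (ρ : List Letter) : List Letter :=
  ρ.filter (fun m => decide (m.sym ∈ S'.syms))

/-- An interpretation over a domain D. -/
structure Interp (D : Type) where
  fn : Fn → List D → D
  pn : Pn → List D → Bool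

/-- One execution step on (non-⊥) states; predicate letters and labels do not change the state. -/
def execLetter {D : Type} (i : Interp D) (d : Var → D) : Letter → (Var → D)
  | .asgn y f xs => Function.update d y (i.fn f (xs.map d))
  | _ => d

/-- M[schema(σ)]^i_d : the state after executing the assignments of the word σ from d. -/
def execWord {D : Type} (i : Interp D) (d : Var → D) (σ : List Letter) : Var → D :=
  σ.foldl (execLetter i) d

/-- ρ is consistent with (i,d): every predicate letter in ρ is evaluated by i in accordance
    with the sequence of assignments preceding it. -/
def Consistent {D : Type} (i : Interp D) (d : Var → D) (ρ : List Letter) : Prop :=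
  ∀ σ p xs Z, (σ ++ [Letter.pred p xs Z]) <+: ρ → i.pn p (xs.map (execWord i d σ)) = Z

/-- `ρ` is a finite prefix of the path π(S,i,d). -/
def PrefixOfPi {D : Type} (i : Interp D) (d : Var → D) (S : Schema) (ρ : List Letter) : Prop :=
  PathPrefix S ρ ∧ Consistent i d ρ

/-- The set of finite prefixes of π(S,i,d); this set determines the
    (possibly infinite) word π(S,i,d) uniquely. -/
def PiPrefixes {D : Type} (i : Interp D) (d : Var → D) (S : Schema) : Set (List Letter) :=
  {ρ | PrefixOfPi i d S ρ}

open Classical in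
/-- The final state M[S]^i_d; `none` represents ⊥ (non-termination). -/
noncomputable def finalState {D : Type} (i : Interp D) (d : Var → D) (S : Schema) :
    Option (Var → D) :=
  if h : ∃ ρ, Paths S ρ ∧ Consistent i d ρ then some (execWord i d h.choose) else none

/-- The Herbrand domain Term(F,V). -/
inductive Tm : Type where
  | var : Var → Tm
  | app : Fn → List Tm → Tm

/-- A Herbrand interpretation: function symbols act as term constructors. -/
def Interp.IsHerbrand (j : Interp Tm) : Prop := ∀ f ts, j.fn f ts = Tm.app f ts

/-- The natural state e. -/
def natState : Var → Tm := Tm.var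

/-- A fixed Herbrand interpretation (the predicate part is irrelevant for executing
    assignments). -/
def hInterp : Interp Tm := ⟨fun f ts => Tm.app f ts, fun _ _ => true⟩

/-- M[σ]_e : the Herbrand state after executing the assignments of σ from the natural state. -/
def hExec (σ : List Letter) : Var → Tm := execWord hInterp natState σ

/-- p(t) = Y is a consequence of μ. -/
def Consequence (μ : List Letter) (p : Pn) (ts : List Tm) (Y : Bool) : Prop :=
  ∃ μ' xs, (μ' ++ [Letter.pred p xs Y]) <+: μ ∧ xs.map (hExec μ') = ts

/-- ρ is executable: ρ is a prefix of π(S,i,d) for some domain, interpretation and state. -/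
def Executable (S : Schema) (ρ : List Letter) : Prop :=
  ∃ (D : Type) (i : Interp D) (d : Var → D), PrefixOfPi i d S ρ

/-- ρ (through S) and ρ' (through S') are compatible: for some domain, interpretation i
    and state d they are prefixes of π(S,i,d) and π(S',i,d) respectively. -/
def Compatible (S : Schema) (ρ : List Letter) (S' : Schema) (ρ' : List Letter) : Prop :=
  ∃ (D : Type) (i : Interp D) (d : Var → D), PrefixOfPi i d S ρ ∧ PrefixOfPi i d S' ρ'

/-- `Sub T S`: T occurs as a subschema of S. -/
inductive Sub : Schema → Schema → Prop where
  | refl (S : Schema) : Sub S S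
  | seqL {T S₁ S₂} : Sub T S₁ → Sub T (Schema.seq S₁ S₂)
  | seqR {T S₁ S₂} : Sub T S₂ → Sub T (Schema.seq S₁ S₂)
  | iteT {T p xs S₁ S₂} : Sub T S₁ → Sub T (Schema.ite p xs S₁ S₂)
  | iteF {T p xs S₁ S₂} : Sub T S₂ → Sub T (Schema.ite p xs S₁ S₂)
  | loop {T q xs B} : Sub T B → Sub T (Schema.loop q xs B)

/-- Simple l-reductions of paths through S. -/
inductive SimpleRed (S : Schema) (l : Label) : List Letter → List Letter → Prop where
  | loopRed {p xs B σ α γ} :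
      Sub (Schema.loop p xs B) S → Paths B σ → Sym.lab l ∉ B.syms →
      SimpleRed S l (α ++ [Letter.pred p xs true] ++ σ ++ [Letter.pred p xs false] ++ γ)
                    (α ++ [Letter.pred p xs false] ++ γ)
  | iteRed {p xs S₁ S₂ σ α γ} {Z : Bool} :
      Sub (Schema.ite p xs S₁ S₂) S → Paths (if Z then S₁ else S₂) σ →
      (if Z then S₂ else S₁) = Schema.skip →
      Sym.lab l ∉ S₁.syms → Sym.lab l ∉ S₂.syms →
      SimpleRed S l (α ++ [Letter.pred p xs Z] ++ σ ++ γ)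
                    (α ++ [Letter.pred p xs (!Z)] ++ γ)

/-- ρ is l-reducible to ρ': zero or more simple l-reductions. -/
def Reducible (S : Schema) (l : Label) : List Letter → List Letter → Prop :=
  Relation.ReflTransGen (SimpleRed S l)

/-- maxpre(σ,σ') : the maximal common prefix of two words. -/
def maxpre : List Letter → List Letter → List Letter
  | a :: as, b :: bs => if a = b then a :: maxpre as bs else []
  | _, _ => []

/-- The sequence of function and predicate symbols through which a path passes. -/
def symSeq (ρ : List Letter) : List Sym :=
  ρ.filterMap fun m => match m with
    | Letter.asgn _ f _ => some (Sym.fn f)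
    | Letter.pred p _ _ => some (Sym.pn p)
    | Letter.lab _ => none

/-- S' (a quotient of S containing l) is a (ρl,V)-path-faithful dynamic slice of S:
    (1) every variable of V defines the same term after proj_{S'}(ρ) as after ρ, and
    (2) every maximal path through S' compatible with ρ has proj_{S'}(ρ) as a prefix
        (equivalently: whenever ρ is a prefix of π(S,i,d), proj_{S'}(ρ) is a prefix
        of π(S',i,d)). -/
def IsPFDS (S : Schema) (ρ : List Letter) (l : Label) (V : Set Var) (S' : Schema) : Prop :=
  (∀ v ∈ V, hExec (proj S' ρ) v = hExec ρ v) ∧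
  ∀ (D : Type) (i : Interp D) (d : Var → D),
    PrefixOfPi i d S ρ → PrefixOfPi i d S' (proj S' ρ)

/-- S' (a quotient of S containing l) is a (ρl,V)-dynamic slice of S: every maximal path
    through S' compatible with ρ has a prefix ρ' to which proj_{S'}(ρ) is l-reducible and
    such that every variable of V defines the same term after ρ' as after ρ. -/
def IsDS (S : Schema) (ρ : List Letter) (l : Label) (V : Set Var) (S' : Schema) : Prop :=
  ∀ (D : Type) (i : Interp D) (d : Var → D), PrefixOfPi i d S ρ →
    ∃ ρ', PrefixOfPi i d S' ρ' ∧ Reducible S' l (proj S' ρ) ρ' ∧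
      ∀ v ∈ V, hExec ρ' v = hExec ρ v

/-- T' is a (ρ,V)-path-faithful dynamic end slice of T
    (S = T l with a label l at the end, S' = T' l). -/
def IsPFDSEnd (T : Schema) (ρ : List Letter) (V : Set Var) (T' : Schema) : Prop :=
  IsPFDS (Schema.seq T (Schema.label 0)) ρ 0 V (Schema.seq T' (Schema.label 0))

/-- T' is a (ρ,V)-dynamic end slice of T. -/
def IsDSEnd (T : Schema) (ρ : List Letter) (V : Set Var) (T' : Schema) : Prop :=
  IsDS (Schema.seq T (Schema.label 0)) ρ 0 V (Schema.seq T' (Schema.label 0))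

/-- The set of function and predicate symbols of a schema. -/
def fpsyms (T : Schema) : Set Sym := {s | s ∈ T.syms ∧ ∀ l : Label, s ≠ Sym.lab l}

/-- T is a minimal (ρ,V)-path-faithful dynamic end slice of S: it is a path-faithful
    dynamic end slice, and no quotient of S with a strictly smaller set of function and
    predicate symbols is a (ρ,V)-dynamic end slice of S. -/
def MinimalPFDSEnd (S : Schema) (ρ : List Letter) (V : Set Var) (T : Schema) : Prop :=
  IsPFDSEnd S ρ V T ∧
  ∀ T', IsQuotient T' S → fpsyms T' ⊂ fpsyms T → ¬ IsDSEnd S ρ V T'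

def Contracts (l : Label) (ρ ρ' : List Letter) : Prop :=
  (symSeq ρ').Sublist (symSeq ρ) ∧
    ρ'.count (Letter.lab l) = ρ.count (Letter.lab l) ∧ ρ'.length ≤ ρ.length

namespace Contracts

variable {l : Label}

theorem refl (ρ : List Letter) : Contracts l ρ ρ :=
  ⟨List.Sublist.refl _, rfl, le_rfl⟩

theorem trans {ρ₁ ρ₂ ρ₃ : List Letter} (h₁₂ : Contracts l ρ₁ ρ₂) (h₂₃ : Contracts l ρ₂ ρ₃) :
    Contracts l ρ₁ ρ₃ :=
  ⟨h₂₃.1.trans h₁₂.1, h₂₃.2.1.trans h₁₂.2.1, h₂₃.2.2.trans h₁₂.2.2⟩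

/-- Both kinds of simple reduction have this shape: a predicate letter followed by an `l`-free
segment is replaced by a letter of the same predicate symbol. -/
theorem of_replace_pred (α δ γ : List Letter) (p : Pn) (xs : List Var) (Z Z' : Bool)
    (hδ : Letter.lab l ∉ δ) :
    Contracts l (α ++ [Letter.pred p xs Z] ++ δ ++ γ) (α ++ [Letter.pred p xs Z'] ++ γ) := by
  refine ⟨?_, ?_, ?_⟩
  · simp only [symSeq, List.filterMap_append, List.filterMap_cons, List.filterMap_nil,
      List.append_assoc]
    exact ((List.sublist_append_right _ _).cons_cons _).append_left _
  · simp [List.count_append, List.count_eq_zero.2 hδ]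
  · simp only [List.length_append, List.length_cons, List.length_nil]
    omega

end Contracts

theorem Paths.sym_mem {B : Schema} {σ : List Letter} (h : Paths B σ) :
    ∀ m ∈ σ, m.sym ∈ B.syms := by
  induction h with
  | skip => simp
  | seq _ _ ih₁ ih₂ =>
    simp only [List.mem_append, Schema.syms]
    rintro m (hm | hm)
    exacts [Or.inl (ih₁ m hm), Or.inr (ih₂ m hm)]
  | iteTrue _ ih =>
    simp only [List.mem_cons, Schema.syms, List.mem_append]
    rintro m (rfl | hm)
    exacts [Or.inl rfl, Or.inr (Or.inl (ih m hm))]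
  | iteFalse _ ih =>
    simp only [List.mem_cons, Schema.syms, List.mem_append]
    rintro m (rfl | hm)
    exacts [Or.inl rfl, Or.inr (Or.inr (ih m hm))]
  | loopTrue _ _ ih₁ ih₂ =>
    simp only [List.mem_cons, List.mem_append, Schema.syms] at ih₂ ⊢
    rintro m (rfl | hm | hm)
    exacts [Or.inl rfl, Or.inr (ih₁ m hm), ih₂ m hm]
  | _ => simp [Schema.syms, Letter.sym]

theorem Paths.lab_not_mem {B : Schema} {σ : List Letter} (h : Paths B σ) {l : Label}
    (hl : Sym.lab l ∉ B.syms) : Letter.lab l ∉ σ :=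
  fun hmem => hl (h.sym_mem _ hmem)

theorem SimpleRed.contracts {S : Schema} {l : Label} {ρ ρ' : List Letter}
    (h : SimpleRed S l ρ ρ') : Contracts l ρ ρ' := by
  cases h with
  | @loopRed p xs B σ α γ _ hσ hl =>
    have hδ : Letter.lab l ∉ σ ++ [Letter.pred p xs false] := by
      simpa using hσ.lab_not_mem hl
    simpa using Contracts.of_replace_pred α _ γ p xs true false hδ
  | @iteRed p xs S₁ S₂ σ α γ Z _ hσ _ hl₁ hl₂ =>
    have hδ : Letter.lab l ∉ σ := by
      cases Z
      exacts [hσ.lab_not_mem hl₂, hσ.lab_not_mem hl₁]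
    exact Contracts.of_replace_pred α σ γ p xs Z (!Z) hδ

theorem Reducible.contracts {S : Schema} {l : Label} {ρ ρ' : List Letter}
    (h : Reducible S l ρ ρ') : Contracts l ρ ρ' := by
  induction h with
  | refl => exact Contracts.refl ρ
  | tail _ hstep ih => exact ih.trans hstep.contracts

theorem statement_9_general (S : Schema) (l : Label) (ρ ρ' : List Letter)
    (h : Reducible S l ρ ρ') :
    (symSeq ρ').Sublist (symSeq ρ) ∧
    ρ'.count (Letter.lab l) = ρ.count (Letter.lab l) ∧
    ρ'.length ≤ ρ.length :=
  h.contracts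

/-- if ρ is l-reducible to ρ' then (1) the sequence of function and predicate
    symbols through which ρ' passes is a subsequence of that of ρ, (2) ρ and ρ' pass
    through the label l the same number of times, and (3) |ρ'| ≤ |ρ|. -/
theorem statement_9 (S : Schema) (hlin : S.Linear) (l : Label) (ρ ρ' : List Letter)
    (hρ : PathPrefix S ρ) (hρ' : PathPrefix S ρ') (h : Reducible S l ρ ρ') :
    (symSeq ρ').Sublist (symSeq ρ) ∧
    ρ'.count (Letter.lab l) = ρ.count (Letter.lab l) ∧
    ρ'.length ≤ ρ.length :=
  statement_9_general S l ρ ρ' h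

end SchemaSlicing
end

section
/- Two paths ρ through a schema S and ρ' through a schema S' are compatible (i.e. for some domain D, interpretation i over D and state d : V → D, ρ is a prefix of π(S,i,d) and ρ' is a prefix of π(S',i,d)) if and only if there exists a Herbrand interpretation j such that ρ is a prefix of π(S,j,e) and ρ' is a prefix of π(S',j,e). In particular, a path ρ through S is executable if and only if ρ is a prefix of π(S,j,e) for some Herbrand interpretation j. -/
namespace SchemaSlicing

/- A compatible pair of paths stays compatible when the domain is replaced by the Herbrand
domain: keep function symbols as term constructors and decide `p(t₁,…,tₙ)` by evaluating the
terms tₖ in the original interpretation and state. Since executing assignments commutes with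
term evaluation, every predicate letter then receives the same truth value as before. -/

def Tm.eval {D : Type} (i : Interp D) (d : Var → D) : Tm → D
  | .var v => d v
  | .app f ts => i.fn f (ts.map (Tm.eval i d))

lemma Tm.eval_var {D : Type} (i : Interp D) (d : Var → D) (v : Var) :
    Tm.eval i d (.var v) = d v := by
  simp [Tm.eval]

lemma Tm.eval_app {D : Type} (i : Interp D) (d : Var → D) (f : Fn) (ts : List Tm) :
    Tm.eval i d (.app f ts) = i.fn f (ts.map (Tm.eval i d)) := by
  simp [Tm.eval]

section Herbrand

variable {D : Type} (i : Interp D) (d : Var → D) {j : Interp Tm}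

lemma execLetter_comp_eval (hj : j.IsHerbrand) (t : Var → Tm) (m : Letter) :
    execLetter i (Tm.eval i d ∘ t) m = Tm.eval i d ∘ execLetter j t m := by
  cases m with
  | asgn y f xs =>
    funext v
    by_cases hv : v = y
    · subst hv
      simp [execLetter, hj f, Tm.eval_app, List.map_map]
    · simp [execLetter, hv]
  | lab | pred => rfl

lemma execWord_comp_eval (hj : j.IsHerbrand) (σ : List Letter) (t : Var → Tm) :
    execWord i (Tm.eval i d ∘ t) σ = Tm.eval i d ∘ execWord j t σ := by
  induction σ generalizing t with
  | nil => rfl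
  | cons m σ ih =>
    simp only [execWord, List.foldl_cons] at ih ⊢
    rw [execLetter_comp_eval i d hj, ih]

lemma execWord_eq_eval_execWord_natState (hj : j.IsHerbrand) (σ : List Letter) :
    execWord i d σ = Tm.eval i d ∘ execWord j natState σ := by
  have hd : Tm.eval i d ∘ natState = d := funext (Tm.eval_var i d)
  rw [← execWord_comp_eval i d hj, hd]

def Interp.herbrandization : Interp Tm :=
  ⟨Tm.app, fun p ts => i.pn p (ts.map (Tm.eval i d))⟩

lemma Interp.isHerbrand_herbrandization : (i.herbrandization d).IsHerbrand :=
  fun _ _ => rfl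

lemma Consistent.herbrandization {ρ : List Letter} (h : Consistent i d ρ) :
    Consistent (i.herbrandization d) natState ρ := by
  intro σ p xs Z hpre
  have hexec := execWord_eq_eval_execWord_natState i d (i.isHerbrand_herbrandization d) σ
  simpa [Interp.herbrandization, List.map_map, hexec] using h σ p xs Z hpre

lemma PrefixOfPi.herbrandization {S : Schema} {ρ : List Letter} (h : PrefixOfPi i d S ρ) :
    PrefixOfPi (i.herbrandization d) natState S ρ :=
  ⟨h.1, h.2.herbrandization⟩

end Herbrand

theorem statement_13_general (S S' : Schema) (ρ ρ' : List Letter) :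
    (Compatible S ρ S' ρ' ↔
      ∃ j : Interp Tm, j.IsHerbrand ∧
        PrefixOfPi j natState S ρ ∧ PrefixOfPi j natState S' ρ') ∧
    (Executable S ρ ↔
      ∃ j : Interp Tm, j.IsHerbrand ∧ PrefixOfPi j natState S ρ) := by
  refine ⟨⟨?_, ?_⟩, ⟨?_, ?_⟩⟩
  · rintro ⟨D, i, d, h, h'⟩
    exact ⟨i.herbrandization d, i.isHerbrand_herbrandization d,
      h.herbrandization, h'.herbrandization⟩
  · rintro ⟨j, -, h, h'⟩
    exact ⟨Tm, j, natState, h, h'⟩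
  · rintro ⟨D, i, d, h⟩
    exact ⟨i.herbrandization d, i.isHerbrand_herbrandization d, h.herbrandization⟩
  · rintro ⟨j, -, h⟩
    exact ⟨Tm, j, natState, h⟩

/-- two paths ρ (through S) and ρ' (through S') are compatible iff there is
    a Herbrand interpretation j such that ρ is a prefix of π(S,j,e) and ρ' is a prefix of
    π(S',j,e); in particular ρ is executable iff ρ is a prefix of π(S,j,e) for some
    Herbrand interpretation j. -/
theorem statement_13 (S S' : Schema) (ρ ρ' : List Letter)
    (hρ : PathPrefix S ρ) (hρ' : PathPrefix S' ρ') :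
    (Compatible S ρ S' ρ' ↔
      ∃ j : Interp Tm, j.IsHerbrand ∧
        PrefixOfPi j natState S ρ ∧ PrefixOfPi j natState S' ρ') ∧
    (Executable S ρ ↔
      ∃ j : Interp Tm, j.IsHerbrand ∧ PrefixOfPi j natState S ρ) :=
  statement_13_general S S' ρ ρ'

end SchemaSlicing
end
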